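/- arXiv:2508.13753 — 6 statements merged into one kernel-verified Lean document; each statement's English description precedes it below -/
import Mathlib

section
/- The function g : ℝ^{2×2} → ℝ defined by g(M) = (1/2)(|M|² + √(|M|⁴ - 4(det M)²)) is convex, where |M| denotes the Frobenius norm. -/
noncomputable def frobSq (M : Matrix (Fin 2) (Fin 2) ℝ) : ℝ := ∑ i, ∑ j, (M i j)^2

noncomputable def gFun (M : Matrix (Fin 2) (Fin 2) ℝ) : ℝ :=
  (1/2) * (frobSq M + Real.sqrt ((frobSq M)^2 - 4 * (M.det)^2))

lemma quad_le (α β γ v w : ℝ) (hv : v^2 + w^2 = 1) :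
    α*v^2 + 2*β*v*w + γ*w^2 ≤ (α + γ + Real.sqrt ((α-γ)^2 + 4*β^2)) / 2 := by
  set r := Real.sqrt ((α-γ)^2 + 4*β^2) with hr
  have hr0 : 0 ≤ r := Real.sqrt_nonneg _
  have hr2 : r^2 = (α-γ)^2 + 4*β^2 := Real.sq_sqrt (by positivity)
  have hXY : (v^2-w^2)^2 + (2*v*w)^2 = 1 := by
    linear_combination (v^2+w^2+1) * hv
  have hL2 : ((α-γ)*(v^2-w^2) + 4*β*v*w)^2 ≤ r^2 := by
    have h1 : ((α-γ)*(v^2-w^2) + 4*β*v*w)^2 + ((α-γ)*(2*v*w) - 2*β*(v^2-w^2))^2 = r^2 := by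
      rw [hr2]; linear_combination ((α-γ)^2 + 4*β^2) * hXY
    nlinarith [sq_nonneg ((α-γ)*(2*v*w) - 2*β*(v^2-w^2)), h1]
  have hL : (α-γ)*(v^2-w^2) + 4*β*v*w ≤ r := by
    nlinarith [hL2, hr0]
  have hrw : α*v^2 + 2*β*v*w + γ*w^2
      = ((α+γ) + ((α-γ)*(v^2-w^2) + 4*β*v*w))/2 := by
    linear_combination ((α+γ)/2) * hv
  rw [hrw]
  linarith

lemma quad_attained (α β γ : ℝ) :
    ∃ v w : ℝ, v^2 + w^2 = 1 ∧
      α*v^2 + 2*β*v*w + γ*w^2 = (α + γ + Real.sqrt ((α-γ)^2 + 4*β^2)) / 2 := by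
  set r := Real.sqrt ((α-γ)^2 + 4*β^2) with hr
  have hr0 : 0 ≤ r := Real.sqrt_nonneg _
  have hr2 : r^2 = (α-γ)^2 + 4*β^2 := Real.sq_sqrt (by positivity)
  by_cases hβ : β = 0
  · subst hβ
    rcases le_total γ α with h | h
    · refine ⟨1, 0, by ring, ?_⟩
      have : r = α - γ := by
        rw [hr]; simpa using Real.sqrt_sq (by linarith : (0:ℝ) ≤ α - γ)
      rw [this]; ring
    · refine ⟨0, 1, by ring, ?_⟩
      have : r = γ - α := by
        rw [hr]
        have h2 : (α-γ)^2 + 4*(0:ℝ)^2 = (γ-α)^2 := by ring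
        rw [h2]; exact Real.sqrt_sq (by linarith)
      rw [this]; ring
  · set lam := (α + γ + r) / 2 with hlam
    have hchar : lam^2 - (α+γ)*lam + (α*γ - β^2) = 0 := by
      rw [hlam]; field_simp; nlinarith [hr2]
    have hn2 : 0 < (lam - γ)^2 + β^2 := by positivity
    set n := Real.sqrt ((lam - γ)^2 + β^2) with hn
    have hnpos : 0 < n := Real.sqrt_pos.mpr hn2
    have hnsq : n^2 = (lam - γ)^2 + β^2 := Real.sq_sqrt (le_of_lt hn2)
    have hne : n ≠ 0 := ne_of_gt hnpos
    refine ⟨(lam - γ)/n, β/n, ?_, ?_⟩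
    · have : ((lam-γ)/n)^2 + (β/n)^2 = ((lam-γ)^2 + β^2)/n^2 := by ring
      rw [this, ← hnsq]; field_simp
    · have key : α*(lam-γ)^2 + 2*β*(lam-γ)*β + γ*β^2 = lam * ((lam-γ)^2 + β^2) := by
        linear_combination (-(lam-γ)) * hchar
      have h1 : α*((lam-γ)/n)^2 + 2*β*((lam-γ)/n)*(β/n) + γ*(β/n)^2
          = (α*(lam-γ)^2 + 2*β*(lam-γ)*β + γ*β^2)/n^2 := by ring
      rw [h1, key, ← hnsq]
      field_simp

lemma gFun_eq (M : Matrix (Fin 2) (Fin 2) ℝ) :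
    gFun M = (((M 0 0)^2 + (M 1 0)^2) + ((M 0 1)^2 + (M 1 1)^2) +
      Real.sqrt ((((M 0 0)^2 + (M 1 0)^2) - ((M 0 1)^2 + (M 1 1)^2))^2 +
        4*(M 0 0 * M 0 1 + M 1 0 * M 1 1)^2)) / 2 := by
  have h1 : frobSq M = ((M 0 0)^2 + (M 1 0)^2) + ((M 0 1)^2 + (M 1 1)^2) := by
    simp [frobSq, Fin.sum_univ_two]; ring
  have h2 : (frobSq M)^2 - 4 * (M.det)^2
      = (((M 0 0)^2 + (M 1 0)^2) - ((M 0 1)^2 + (M 1 1)^2))^2 +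
        4*(M 0 0 * M 0 1 + M 1 0 * M 1 1)^2 := by
    rw [h1, Matrix.det_fin_two]; ring
  rw [gFun, h2, h1]; ring

lemma entry_bound (M : Matrix (Fin 2) (Fin 2) ℝ) (v w : ℝ) (hv : v^2 + w^2 = 1) :
    (M 0 0 * v + M 0 1 * w)^2 + (M 1 0 * v + M 1 1 * w)^2 ≤ gFun M := by
  rw [gFun_eq]
  have h := quad_le ((M 0 0)^2 + (M 1 0)^2) (M 0 0 * M 0 1 + M 1 0 * M 1 1)
    ((M 0 1)^2 + (M 1 1)^2) v w hv
  nlinarith [h]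

lemma entry_attained (M : Matrix (Fin 2) (Fin 2) ℝ) :
    ∃ v w : ℝ, v^2 + w^2 = 1 ∧
      (M 0 0 * v + M 0 1 * w)^2 + (M 1 0 * v + M 1 1 * w)^2 = gFun M := by
  obtain ⟨v, w, hv, heq⟩ := quad_attained ((M 0 0)^2 + (M 1 0)^2)
    (M 0 0 * M 0 1 + M 1 0 * M 1 1) ((M 0 1)^2 + (M 1 1)^2)
  refine ⟨v, w, hv, ?_⟩
  rw [gFun_eq]
  linear_combination heq

theorem gFun_convex : ConvexOn ℝ Set.univ gFun := by
  refine ⟨convex_univ, ?_⟩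
  intro M _ N _ a b ha hb hab
  obtain ⟨v, w, hv, heq⟩ := entry_attained (a • M + b • N)
  have hx : ∀ i j, (a • M + b • N) i j = a * M i j + b * N i j := by
    intro i j; simp [Matrix.add_apply, Matrix.smul_apply, smul_eq_mul]
  have hM := entry_bound M v w hv
  have hN := entry_bound N v w hv
  simp only [smul_eq_mul]
  rw [← heq, hx 0 0, hx 0 1, hx 1 0, hx 1 1]
  have hM' := mul_nonneg ha (sub_nonneg.2 hM)
  have hN' := mul_nonneg hb (sub_nonneg.2 hN)
  nlinarith [mul_nonneg (mul_nonneg ha hb)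
      (sq_nonneg ((M 0 0 * v + M 0 1 * w) - (N 0 0 * v + N 0 1 * w))),
    mul_nonneg (mul_nonneg ha hb)
      (sq_nonneg ((M 1 0 * v + M 1 1 * w) - (N 1 0 * v + N 1 1 * w))),
    hM', hN', ha, hb, hab]
end

section
/- In the coordinates q₁ = (m₁₁+m₂₂)/√2, q₂ = (m₁₁-m₂₂)/√2, q₃ = (m₁₂+m₂₁)/√2, q₄ = (m₁₂-m₂₁)/√2, the function g(M) = (1/2)(|M|² + √(|M|⁴ - 4(det M)²)) equals (1/2)(√(q₁²+q₄²) + √(q₂²+q₃²))². -/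
/-! With `a = q₁² + q₄²` and `b = q₂² + q₃²` one has `|M|² = a + b` and `2 det M = a - b`,
so the discriminant `|M|⁴ - 4 (det M)²` is `(a + b)² - (a - b)² = 4ab`, whose square root is
`2 √a √b`; then `|M|² + 2 √a √b = (√a + √b)²`. -/

theorem Real.add_add_sqrt_sq_add_sub_sq_sub {a b : ℝ} (ha : 0 ≤ a) (hb : 0 ≤ b) :
    a + b + √((a + b) ^ 2 - (a - b) ^ 2) = (√a + √b) ^ 2 := by
  have hdisc : (a + b) ^ 2 - (a - b) ^ 2 = (2 * √a * √b) ^ 2 := by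
    rw [mul_pow, mul_pow, Real.sq_sqrt ha, Real.sq_sqrt hb]
    ring
  rw [hdisc, Real.sqrt_sq (by positivity), add_sq, Real.sq_sqrt ha, Real.sq_sqrt hb]
  ring

theorem two_mul_frobSq (M : Matrix (Fin 2) (Fin 2) ℝ) :
    2 * frobSq M = ((M 0 0 + M 1 1) ^ 2 + (M 0 1 - M 1 0) ^ 2)
      + ((M 0 0 - M 1 1) ^ 2 + (M 0 1 + M 1 0) ^ 2) := by
  simp only [frobSq, Fin.sum_univ_two]
  ring

theorem four_mul_det_fin_two (M : Matrix (Fin 2) (Fin 2) ℝ) :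
    4 * M.det = ((M 0 0 + M 1 1) ^ 2 + (M 0 1 - M 1 0) ^ 2)
      - ((M 0 0 - M 1 1) ^ 2 + (M 0 1 + M 1 0) ^ 2) := by
  rw [Matrix.det_fin_two]
  ring

theorem div_sqrt_two_sq (x : ℝ) : (x / √2) ^ 2 = x ^ 2 / 2 := by
  rw [div_pow, Real.sq_sqrt zero_le_two]

theorem gFun_coords (M : Matrix (Fin 2) (Fin 2) ℝ)
    (q₁ q₂ q₃ q₄ : ℝ)
    (hq₁ : q₁ = (M 0 0 + M 1 1) / Real.sqrt 2)
    (hq₂ : q₂ = (M 0 0 - M 1 1) / Real.sqrt 2)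
    (hq₃ : q₃ = (M 0 1 + M 1 0) / Real.sqrt 2)
    (hq₄ : q₄ = (M 0 1 - M 1 0) / Real.sqrt 2) :
    gFun M = (1/2) * (Real.sqrt (q₁^2 + q₄^2) + Real.sqrt (q₂^2 + q₃^2))^2 := by
  set a := q₁ ^ 2 + q₄ ^ 2
  set b := q₂ ^ 2 + q₃ ^ 2
  have ha : 2 * a = (M 0 0 + M 1 1) ^ 2 + (M 0 1 - M 1 0) ^ 2 := by
    simp only [a, hq₁, hq₄, div_sqrt_two_sq]
    ring
  have hb : 2 * b = (M 0 0 - M 1 1) ^ 2 + (M 0 1 + M 1 0) ^ 2 := by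
    simp only [b, hq₂, hq₃, div_sqrt_two_sq]
    ring
  have hfrob : frobSq M = a + b := by linarith [two_mul_frobSq M]
  have hdet : 4 * M.det ^ 2 = (a - b) ^ 2 := by
    have : 2 * M.det = a - b := by linarith [four_mul_det_fin_two M]
    rw [← this]
    ring
  rw [gFun, hfrob, hdet, Real.add_add_sqrt_sq_add_sub_sq_sub (by positivity) (by positivity)]
end

section
/- Let Λ be a nonzero 2×2 real matrix with 2·det Λ = |Λ|². If there exists s ∈ [-1,1] such that (Λ : M)² ≤ |M|² + 2s·det M for all 2×2 matrices M, then g(Λ) ≤ 1, where g(Λ) = (1/2)(|Λ|² + √(|Λ|⁴ - 4(det Λ)²)). Conversely, if g(Λ) ≤ 1 then (Λ : M)² ≤ |M|² + 2·det M for all M. -/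
noncomputable def dotp (M N : Matrix (Fin 2) (Fin 2) ℝ) : ℝ := ∑ i, ∑ j, M i j * N i j

theorem quadratic_form_special_case (Λ : Matrix (Fin 2) (Fin 2) ℝ)
    (hΛ : Λ ≠ 0) (hdet : 2 * Λ.det = frobSq Λ) :
    ((∃ s ∈ Set.Icc (-1 : ℝ) 1, ∀ M : Matrix (Fin 2) (Fin 2) ℝ,
        (dotp Λ M)^2 ≤ frobSq M + 2 * s * M.det) → gFun Λ ≤ 1) ∧
    (gFun Λ ≤ 1 → ∀ M : Matrix (Fin 2) (Fin 2) ℝ,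
        (dotp Λ M)^2 ≤ frobSq M + 2 * M.det) := by
  set a := Λ 0 0 with ha
  set b := Λ 0 1 with hb
  set c := Λ 1 0 with hc0
  set d := Λ 1 1 with hd0
  have hdet2 : Λ.det = a * d - b * c := by
    rw [Matrix.det_fin_two]
  have hF : frobSq Λ = a^2 + b^2 + c^2 + d^2 := by
    simp [frobSq, Fin.sum_univ_two]; ring
  have hkey : 2 * (a * d - b * c) = a^2 + b^2 + c^2 + d^2 := by
    rw [← hdet2, hdet, hF]
  have hd : d = a := by nlinarith [sq_nonneg (a - d), sq_nonneg (b + c)]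
  have hc : c = -b := by nlinarith [sq_nonneg (a - d), sq_nonneg (b + c)]
  have hFv : frobSq Λ = 2 * (a^2 + b^2) := by rw [hF, hd, hc]; ring
  have hDv : Λ.det = a^2 + b^2 := by rw [hdet2, hd, hc]; ring
  have hpos : 0 < a^2 + b^2 := by
    rcases (lt_or_eq_of_le (by positivity : (0:ℝ) ≤ a^2 + b^2)) with h | h
    · exact h
    · exfalso; apply hΛ
      have ha0 : a = 0 := by nlinarith [sq_nonneg a, sq_nonneg b]
      have hb0 : b = 0 := by nlinarith [sq_nonneg a, sq_nonneg b]
      have hc' : c = 0 := by rw [hc, hb0, neg_zero]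
      have hd' : d = 0 := by rw [hd, ha0]
      ext i j
      fin_cases i <;> fin_cases j <;> simp only [Matrix.zero_apply] <;>
        [exact ha ▸ ha0; exact hb ▸ hb0; exact hc0 ▸ hc'; exact hd0 ▸ hd']
  have hg : gFun Λ = a^2 + b^2 := by
    have : (frobSq Λ)^2 - 4 * (Λ.det)^2 = 0 := by rw [hFv, hDv]; ring
    rw [gFun, this, Real.sqrt_zero, hFv]; ring
  constructor
  · rintro ⟨s, hs, hall⟩
    have h1 := hall Λ
    have hdp : dotp Λ Λ = frobSq Λ := by
      simp [dotp, frobSq, sq]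
    rw [hdp, hFv, hDv] at h1
    have hs1 : s ≤ 1 := hs.2
    rw [hg]
    nlinarith [hpos, mul_pos hpos hpos]
  · intro hgle M
    rw [hg] at hgle
    set u := M 0 0 + M 1 1 with hu
    set v := M 0 1 - M 1 0 with hv
    have hdp : dotp Λ M = a * u + b * v := by
      simp [dotp, Fin.sum_univ_two, ← ha, ← hb, ← hc0, ← hd0, hd, hc, hu, hv]
      ring
    have hrhs : frobSq M + 2 * M.det = u^2 + v^2 := by
      rw [Matrix.det_fin_two]
      simp [frobSq, Fin.sum_univ_two, hu, hv]
      ring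
    rw [hdp, hrhs]
    have hid : u^2 + v^2 - (a*u + b*v)^2
        = (a*v - b*u)^2 + (1 - (a^2 + b^2)) * (u^2 + v^2) := by ring
    have h2 : (0:ℝ) ≤ (1 - (a^2 + b^2)) * (u^2 + v^2) :=
      mul_nonneg (by linarith) (by positivity)
    linarith [sq_nonneg (a*v - b*u)]
end

section
/- Let Λ be a nonzero 2×2 real matrix. The function φ(s) = (|Λ|² - 2s·det Λ)/(1 - s²) on (-1,1) attains its unique minimum at s₀ = det Λ / g(Λ), and φ(s₀) = g(Λ), where g(Λ) = (1/2)(|Λ|² + √(|Λ|⁴ - 4(det Λ)²)). -/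
theorem phi_unique_minimum (Λ : Matrix (Fin 2) (Fin 2) ℝ)
    (hΛ : Λ ≠ 0) (hdet : 2 * |Λ.det| < frobSq Λ)
    (s₀ : ℝ) (hs₀ : s₀ = Λ.det / gFun Λ)
    (φ : ℝ → ℝ) (hφ : ∀ s, φ s = (frobSq Λ - 2 * s * Λ.det) / (1 - s^2)) :
    s₀ ∈ Set.Ioo (-1 : ℝ) 1 ∧ φ s₀ = gFun Λ ∧
      ∀ s ∈ Set.Ioo (-1 : ℝ) 1, s ≠ s₀ → φ s₀ < φ s := by
  have hFpos : 0 < frobSq Λ := lt_of_le_of_lt (by positivity) hdet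
  have hsqpos : 0 < (frobSq Λ)^2 - 4*(Λ.det)^2 := by
    nlinarith [sq_abs Λ.det, abs_nonneg Λ.det]
  have hD2 : (Real.sqrt ((frobSq Λ)^2 - 4*(Λ.det)^2))^2 = (frobSq Λ)^2 - 4*(Λ.det)^2 :=
    Real.sq_sqrt hsqpos.le
  have hDpos : 0 < Real.sqrt ((frobSq Λ)^2 - 4*(Λ.det)^2) := Real.sqrt_pos.mpr hsqpos
  set D := Real.sqrt ((frobSq Λ)^2 - 4*(Λ.det)^2) with hDdef
  have hgF : gFun Λ = (frobSq Λ + D)/2 := by rw [gFun, hDdef]; ring_nf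
  have hgpos : 0 < gFun Λ := by rw [hgF]; linarith
  have hgne : gFun Λ ≠ 0 := ne_of_gt hgpos
  have hkey : (Λ.det)^2 = gFun Λ * (frobSq Λ - gFun Λ) := by
    rw [hgF]; nlinarith [hD2]
  have hs₀g : gFun Λ * s₀ = Λ.det := by rw [hs₀]; field_simp
  have hds : (gFun Λ)^2 * s₀^2 = (Λ.det)^2 := by rw [← mul_pow, hs₀g]
  have hd2lt : (Λ.det)^2 < (gFun Λ)^2 := by
    have h2g : 2 * gFun Λ - frobSq Λ = D := by rw [hgF]; ring
    nlinarith [hkey, mul_pos hgpos hDpos]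
  have hs1 : s₀^2 < 1 := by nlinarith [hds, hd2lt, mul_pos hgpos hgpos]
  have hmem : s₀ ∈ Set.Ioo (-1 : ℝ) 1 :=
    ⟨by nlinarith [sq_nonneg (s₀ + 1)], by nlinarith [sq_nonneg (s₀ - 1)]⟩
  have h1ms : 0 < 1 - s₀^2 := by linarith
  have hid : frobSq Λ - gFun Λ = gFun Λ * s₀^2 := by
    apply mul_left_cancel₀ hgne
    rw [← hkey, ← hds]; ring
  have hval : φ s₀ = gFun Λ := by
    rw [hφ, div_eq_iff (ne_of_gt h1ms)]
    linear_combination hid + 2*s₀*hs₀g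
  refine ⟨hmem, hval, ?_⟩
  rintro s ⟨hsl, hsr⟩ hne
  have h1s : 0 < 1 - s^2 := by nlinarith
  have hsne : s - s₀ ≠ 0 := sub_ne_zero.mpr hne
  have hssq : 0 < (s - s₀)^2 := by positivity
  rw [hval, hφ, lt_div_iff₀ h1s]
  nlinarith [mul_pos hgpos hssq, hid, hs₀g]
end

section
/- Let Λ be a nonzero 2×2 real matrix, and set s₀ = det Λ / g(Λ) where g(Λ) = (1/2)(|Λ|² + √(|Λ|⁴ - 4(det Λ)²)). If g(Λ) ≤ 1 then (Λ : M)² ≤ |M|² + 2s₀·det M for all 2×2 real matrices M. -/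
set_option maxHeartbeats 2000000


private lemma sq_add_sq_zero {x y : ℝ} (h : x^2 + y^2 = 0) : x = 0 ∧ y = 0 := by
  constructor <;>
  · apply pow_eq_zero_iff (n := 2) (by norm_num) |>.mp
    nlinarith [sq_nonneg x, sq_nonneg y]

private lemma cs_combine (s t X Y p q : ℝ) (hs : 0 < s) (ht : 0 < t)
    (hp : 0 ≤ p) (hq : 0 ≤ q) (hX : X^2 ≤ s^2*p) (hY : Y^2 ≤ t^2*q) :
    (X+Y)^2 ≤ s^2*p + t^2*q + s*t*(p+q) := by
  nlinarith [mul_pos hs ht, sq_nonneg (t*X - s*Y),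
    mul_nonneg (mul_nonneg hs.le ht.le) (sub_nonneg.2 hX),
    mul_nonneg (mul_nonneg hs.le ht.le) (sub_nonneg.2 hY),
    mul_nonneg (sq_nonneg t) (sub_nonneg.2 hX),
    mul_nonneg (sq_nonneg s) (sub_nonneg.2 hY)]

private lemma key_ineq (A B C D u v w x s t : ℝ)
    (hs : 0 ≤ s) (ht : 0 ≤ t)
    (hs2 : s^2 = (A+D)^2 + (B-C)^2)
    (ht2 : t^2 = (A-D)^2 + (B+C)^2) :
    4*(A*u+B*v+C*w+D*x)^2 ≤
      (s+t)^2*(u^2+v^2+w^2+x^2) + 2*(s^2-t^2)*(u*x-v*w) := by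
  rcases eq_or_lt_of_le hs with hs0 | hs'
  · -- s = 0 : Λ is anticonformal
    have h0 : (A+D)^2 + (B-C)^2 = 0 := by rw [← hs2, ← hs0]; norm_num
    obtain ⟨h1, h2⟩ := sq_add_sq_zero h0
    have hdot2 : 2*(A*u+B*v+C*w+D*x) = (A-D)*(u-x)+(B+C)*(v+w) := by
      linear_combination (u+x)*h1 + (v-w)*h2
    have hR : (s+t)^2*(u^2+v^2+w^2+x^2) + 2*(s^2-t^2)*(u*x-v*w)
        = ((A-D)^2+(B+C)^2)*((u-x)^2+(v+w)^2) := by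
      linear_combination
        (-((s+2*t)*(u^2+v^2+w^2+x^2)) - 2*s*(u*x-v*w)) * hs0
          + ((u-x)^2+(v+w)^2) * ht2
    have h4 : 4*(A*u+B*v+C*w+D*x)^2 = ((A-D)*(u-x)+(B+C)*(v+w))^2 := by
      linear_combination
        (2*(A*u+B*v+C*w+D*x) + (A-D)*(u-x)+(B+C)*(v+w)) * hdot2
    rw [h4, hR]
    linarith [sq_nonneg ((A-D)*(v+w) - (B+C)*(u-x))]
  rcases eq_or_lt_of_le ht with ht0 | ht'
  · -- t = 0 : Λ is conformal
    have h0 : (A-D)^2 + (B+C)^2 = 0 := by rw [← ht2, ← ht0]; norm_num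
    obtain ⟨h1, h2⟩ := sq_add_sq_zero h0
    have hdot2 : 2*(A*u+B*v+C*w+D*x) = (A+D)*(u+x)+(B-C)*(v-w) := by
      linear_combination (u-x)*h1 + (v+w)*h2
    have hR : (s+t)^2*(u^2+v^2+w^2+x^2) + 2*(s^2-t^2)*(u*x-v*w)
        = ((A+D)^2+(B-C)^2)*((u+x)^2+(v-w)^2) := by
      linear_combination
        (-((t+2*s)*(u^2+v^2+w^2+x^2)) + 2*t*(u*x-v*w)) * ht0
          + ((u+x)^2+(v-w)^2) * hs2
    have h4 : 4*(A*u+B*v+C*w+D*x)^2 = ((A+D)*(u+x)+(B-C)*(v-w))^2 := by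
      linear_combination
        (2*(A*u+B*v+C*w+D*x) + (A+D)*(u+x)+(B-C)*(v-w)) * hdot2
    rw [h4, hR]
    linarith [sq_nonneg ((A+D)*(v-w) - (B-C)*(u+x))]
  · -- s > 0, t > 0
    have hX : ((A+D)*(u+x)+(B-C)*(v-w))^2 ≤ s^2*((u+x)^2+(v-w)^2) := by
      rw [hs2]
      linarith [sq_nonneg ((A+D)*(v-w) - (B-C)*(u+x))]
    have hY : ((A-D)*(u-x)+(B+C)*(v+w))^2 ≤ t^2*((u-x)^2+(v+w)^2) := by
      rw [ht2]
      linarith [sq_nonneg ((A-D)*(v+w) - (B+C)*(u-x))]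
    have hc := cs_combine s t ((A+D)*(u+x)+(B-C)*(v-w)) ((A-D)*(u-x)+(B+C)*(v+w))
      ((u+x)^2+(v-w)^2) ((u-x)^2+(v+w)^2) hs' ht' (by positivity) (by positivity) hX hY
    linarith [hc]

private lemma sq_le_zero {x : ℝ} (h : x^2 ≤ 0) : x = 0 :=
  pow_eq_zero_iff (n := 2) (by norm_num) |>.mp (le_antisymm h (sq_nonneg x))

private lemma gd_aux1 {a b c d s t : ℝ} (hst : 0 ≤ s*t)
    (hs2 : s^2 = (a+d)^2 + (b-c)^2) :
    0 ≤ ((a^2+b^2+c^2+d^2) + s*t)/2 + (a*d - b*c) := by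
  nlinarith [sq_nonneg s]

private lemma gd_aux2 {a b c d s t : ℝ} (hst : 0 ≤ s*t)
    (ht2 : t^2 = (a-d)^2 + (b+c)^2) :
    0 ≤ ((a^2+b^2+c^2+d^2) + s*t)/2 - (a*d - b*c) := by
  nlinarith [sq_nonneg t]

private lemma one_add_nonneg {g x d : ℝ} (hg : 0 < g) (hxg : x * g = d)
    (hgd : 0 ≤ g + d) : 0 ≤ 1 + x := by nlinarith

private lemma one_sub_nonneg {g x d : ℝ} (hg : 0 < g) (hxg : x * g = d)
    (hgd : 0 ≤ g - d) : 0 ≤ 1 - x := by nlinarith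

private lemma Q_nonneg {x S e : ℝ} (h1 : 0 ≤ 1 + x) (h2 : 0 ≤ 1 - x)
    (hp : 0 ≤ S + 2*e) (hq : 0 ≤ S - 2*e) : 0 ≤ S + 2*x*e := by
  nlinarith [mul_nonneg h1 hp, mul_nonneg h2 hq]

private lemma final_aux {g Q L : ℝ} (hL : 4*L ≤ 4*g*Q) (hg : g ≤ 1)
    (hQ : 0 ≤ Q) : L ≤ Q := by
  nlinarith [mul_nonneg (sub_nonneg.2 hg) hQ]

theorem quadratic_form_optimal_s (Λ : Matrix (Fin 2) (Fin 2) ℝ)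
    (hΛ : Λ ≠ 0) (s₀ : ℝ) (hs₀ : s₀ = Λ.det / gFun Λ)
    (hg : gFun Λ ≤ 1) :
    ∀ M : Matrix (Fin 2) (Fin 2) ℝ, (dotp Λ M)^2 ≤ frobSq M + 2 * s₀ * M.det := by
  intro M
  have hF : frobSq Λ = Λ 0 0^2 + Λ 0 1^2 + Λ 1 0^2 + Λ 1 1^2 := by
    simp only [frobSq, Fin.sum_univ_two]; ring
  have hd : Λ.det = Λ 0 0 * Λ 1 1 - Λ 0 1 * Λ 1 0 := by rw [Matrix.det_fin_two]
  set a := Λ 0 0 with ha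
  set b := Λ 0 1 with hb
  set c := Λ 1 0 with hc
  set d := Λ 1 1 with hdd
  have hFpos : 0 < a^2 + b^2 + c^2 + d^2 := by
    by_contra hcon
    push_neg at hcon
    apply hΛ
    ext i j
    fin_cases i <;> fin_cases j <;> simp only [Matrix.zero_apply]
    · show a = 0
      exact sq_le_zero (by nlinarith [sq_nonneg b, sq_nonneg c, sq_nonneg d])
    · show b = 0
      exact sq_le_zero (by nlinarith [sq_nonneg a, sq_nonneg c, sq_nonneg d])
    · show c = 0
      exact sq_le_zero (by nlinarith [sq_nonneg a, sq_nonneg b, sq_nonneg d])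
    · show d = 0
      exact sq_le_zero (by nlinarith [sq_nonneg a, sq_nonneg b, sq_nonneg c])
  set s := Real.sqrt ((a+d)^2 + (b-c)^2) with hsdef
  set t := Real.sqrt ((a-d)^2 + (b+c)^2) with htdef
  have hs : 0 ≤ s := Real.sqrt_nonneg _
  have ht : 0 ≤ t := Real.sqrt_nonneg _
  have hs2 : s^2 = (a+d)^2 + (b-c)^2 := Real.sq_sqrt (by positivity)
  have ht2 : t^2 = (a-d)^2 + (b+c)^2 := Real.sq_sqrt (by positivity)
  have hsqrt : Real.sqrt ((frobSq Λ)^2 - 4 * (Λ.det)^2) = s * t := by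
    rw [hF, hd]
    have hfac : (a^2+b^2+c^2+d^2)^2 - 4*(a*d - b*c)^2
        = ((a+d)^2 + (b-c)^2) * ((a-d)^2 + (b+c)^2) := by ring
    rw [hfac, Real.sqrt_mul (by positivity)]
  have hg' : gFun Λ = ((a^2+b^2+c^2+d^2) + s*t)/2 := by
    unfold gFun
    rw [hsqrt, hF]
    ring
  have hgpos : 0 < gFun Λ := by
    rw [hg']
    have := mul_nonneg hs ht
    linarith
  have hg4 : 4 * gFun Λ = (s+t)^2 := by
    rw [hg']
    linear_combination - hs2 - ht2
  have hs0g : s₀ * gFun Λ = a*d - b*c := by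
    rw [hs₀, hd, div_mul_cancel₀ _ hgpos.ne']
  -- (1 ± s₀) ≥ 0
  have hgd1 : 0 ≤ gFun Λ + (a*d - b*c) := by
    rw [hg']
    exact gd_aux1 (mul_nonneg hs ht) hs2
  have hgd2 : 0 ≤ gFun Λ - (a*d - b*c) := by
    rw [hg']
    exact gd_aux2 (mul_nonneg hs ht) ht2
  have h1s : 0 ≤ 1 + s₀ := one_add_nonneg hgpos hs0g hgd1
  have h2s : 0 ≤ 1 - s₀ := one_sub_nonneg hgpos hs0g hgd2
  -- matrix M entries
  have hFM : frobSq M = M 0 0^2 + M 0 1^2 + M 1 0^2 + M 1 1^2 := by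
    simp only [frobSq, Fin.sum_univ_two]; ring
  have hdM : M.det = M 0 0 * M 1 1 - M 0 1 * M 1 0 := by rw [Matrix.det_fin_two]
  have hdot : dotp Λ M = a * M 0 0 + b * M 0 1 + c * M 1 0 + d * M 1 1 := by
    simp only [dotp, Fin.sum_univ_two, ha, hb, hc, hdd]; ring
  set u := M 0 0
  set v := M 0 1
  set w := M 1 0
  set x := M 1 1
  -- nonnegativity of the quadratic form
  have hp : (0:ℝ) ≤ (u^2+v^2+w^2+x^2) + 2*(u*x - v*w) := by
    have h : (u^2+v^2+w^2+x^2) + 2*(u*x - v*w) = (u+x)^2 + (v-w)^2 := by ring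
    rw [h]; positivity
  have hq : (0:ℝ) ≤ (u^2+v^2+w^2+x^2) - 2*(u*x - v*w) := by
    have h : (u^2+v^2+w^2+x^2) - 2*(u*x - v*w) = (u-x)^2 + (v+w)^2 := by ring
    rw [h]; positivity
  have hQ : 0 ≤ frobSq M + 2 * s₀ * M.det := by
    rw [hFM, hdM]
    exact Q_nonneg h1s h2s hp hq
  have key := key_ineq a b c d u v w x s t hs ht hs2 ht2
  -- combine
  have hmain : 4 * (dotp Λ M)^2 ≤ 4 * gFun Λ * (frobSq M + 2 * s₀ * M.det) := by
    calc 4 * (dotp Λ M)^2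
        = 4*(a*u+b*v+c*w+d*x)^2 := by rw [hdot]
      _ ≤ (s+t)^2*(u^2+v^2+w^2+x^2) + 2*(s^2-t^2)*(u*x-v*w) := key
      _ = 4 * gFun Λ * (frobSq M + 2 * s₀ * M.det) := by
          rw [hFM, hdM]
          linear_combination (-(u^2+v^2+w^2+x^2)) * hg4 + 2*(u*x-v*w) * hs2
            - 2*(u*x-v*w) * ht2 - 8*(u*x-v*w) * hs0g
  exact final_aux hmain hg hQ
end

section
/- For every n ∈ ℕ there exists a polynomial P : ℝ² → ℝ such that |∂²P/∂y₁²(y)| ≤ |y|^{2n}·|1 - |y|²| and |∂²P/∂y₂²(y)| ≤ |y|^{2n}·|1 - |y|²| for all y ∈ ℝ², and ∂²P/∂y₂²(0, y₂) = y₂^{2n}(1 - y₂²) for all y₂ ∈ ℝ. -/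
/-!
Let `g k = ∏_{l<k} (4l+1) / (2k)!`, so that `(2k+2)(2k+1) g (k+1) = (4k+1) g k`, and let
`S = ∑_{i+j=n} c i j y₁^{2i} y₂^{2j}` with `c i j = (4j+1) g i g j / ((4n+1) g n)`. Comparing
ratios of consecutive terms gives `c i j ≤ (n choose i)`, hence `0 ≤ S ≤ |y|^{2n}`, and `c 0 n = 1` gives `S(0, t) = t^{2n}`.

It then suffices to find `P`, invariant under `y₁ ↔ y₂`, with `∂₂²P = S (1 - |y|²)`: the second
derivative in `y₁` is then the same expression at the swapped point. Integrating twice in `y₂`,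
the degree `2n+2` part of `P` has coefficients proportional to `g i g j`, and the degree `2n+4` part
to `g i g j (1 + 3 / ((4i-3)(4j-3)))`; both are symmetric in `i, j`.
-/

open MvPolynomial Finset

namespace MvPolynomial

variable {R : Type*} [CommSemiring R]

theorem pderiv_zero_pderiv_zero_eq_rename_swap {p : MvPolynomial (Fin 2) R}
    (hp : rename (Equiv.swap 0 1) p = p) :
    pderiv 0 (pderiv 0 p) = rename (Equiv.swap 0 1) (pderiv 1 (pderiv 1 p)) := by
  have h (q : MvPolynomial (Fin 2) R) :
      pderiv 0 (rename (Equiv.swap 0 1) q) = rename (Equiv.swap 0 1) (pderiv 1 q) :=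
    pderiv_rename (Equiv.swap (0 : Fin 2) 1).injective 1 q
  rw [← hp, h, h, hp]

theorem pderiv_one_C_mul_X_pow_mul_X_pow (a : R) (k m : ℕ) :
    pderiv 1 (C a * X 0 ^ k * X 1 ^ (m + 1) : MvPolynomial (Fin 2) R) =
      C ((m + 1 : ℕ) * a) * X 0 ^ k * X 1 ^ m := by
  have hX0 : pderiv 1 (X 0 : MvPolynomial (Fin 2) R) = 0 := pderiv_X_of_ne (by decide)
  simp only [pderiv_mul, pderiv_pow, pderiv_C, hX0, pderiv_X_self, Nat.add_sub_cancel, map_mul,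
    map_natCast]
  ring

noncomputable def evenForm (d : ℕ) (w : ℕ → ℕ → R) : MvPolynomial (Fin 2) R :=
  ∑ p ∈ antidiagonal d, C (w p.1 p.2) * X 0 ^ (2 * p.1) * X 1 ^ (2 * p.2)

theorem evenForm_congr {d : ℕ} {w v : ℕ → ℕ → R} (h : ∀ i j, i + j = d → w i j = v i j) :
    evenForm d w = evenForm d v :=
  sum_congr rfl fun p hp => by rw [h p.1 p.2 (mem_antidiagonal.mp hp)]

theorem evenForm_add (d : ℕ) (w v : ℕ → ℕ → R) :
    evenForm d (fun i j => w i j + v i j) = evenForm d w + evenForm d v := by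
  simp only [evenForm, map_add, add_mul, sum_add_distrib]

theorem X_zero_sq_mul_evenForm {d : ℕ} {w v : ℕ → ℕ → R} (h₀ : v 0 (d + 1) = 0)
    (h : ∀ i j, i + j = d → v (i + 1) j = w i j) :
    X 0 ^ 2 * evenForm d w = evenForm (d + 1) v := by
  rw [evenForm, evenForm, Nat.sum_antidiagonal_succ, h₀, map_zero, zero_mul, zero_mul, zero_add,
    mul_sum]
  refine sum_congr rfl fun p hp => ?_
  rw [h p.1 p.2 (mem_antidiagonal.mp hp)]
  ring

theorem X_one_sq_mul_evenForm {d : ℕ} {w v : ℕ → ℕ → R} (h₀ : v (d + 1) 0 = 0)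
    (h : ∀ i j, i + j = d → v i (j + 1) = w i j) :
    X 1 ^ 2 * evenForm d w = evenForm (d + 1) v := by
  rw [evenForm, evenForm, Nat.sum_antidiagonal_succ', h₀, map_zero, zero_mul, zero_mul, zero_add,
    mul_sum]
  refine sum_congr rfl fun p hp => ?_
  rw [h p.1 p.2 (mem_antidiagonal.mp hp)]
  ring

theorem pderiv_one_pderiv_one_evenForm (d : ℕ) (w : ℕ → ℕ → R) :
    pderiv 1 (pderiv 1 (evenForm (d + 1) w)) =
      evenForm d (fun i j => ((2 * j + 2) * (2 * j + 1) : ℕ) * w i (j + 1)) := by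
  rw [evenForm, map_sum, map_sum, Nat.sum_antidiagonal_succ', evenForm]
  have h₀ : pderiv 1 (C (w (d + 1) 0) * X 0 ^ (2 * (d + 1)) * X 1 ^ (2 * 0) :
      MvPolynomial (Fin 2) R) = 0 := by
    simp
  dsimp only
  rw [h₀, map_zero, zero_add]
  refine sum_congr rfl fun p _ => ?_
  rw [show 2 * (p.2 + 1) = 2 * p.2 + 1 + 1 by ring, pderiv_one_C_mul_X_pow_mul_X_pow,
    pderiv_one_C_mul_X_pow_mul_X_pow]
  congr 3
  push_cast
  ring

theorem rename_swap_evenForm (d : ℕ) (w : ℕ → ℕ → R) :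
    rename (Equiv.swap 0 1) (evenForm d w) = evenForm d (fun i j => w j i) := by
  rw [evenForm, map_sum, evenForm, ← Nat.sum_antidiagonal_swap]
  refine sum_congr rfl fun p _ => ?_
  simp [mul_right_comm]

theorem eval_evenForm (y : Fin 2 → R) (d : ℕ) (w : ℕ → ℕ → R) :
    eval y (evenForm d w) = ∑ p ∈ antidiagonal d, w p.1 p.2 * (y 0 ^ 2) ^ p.1 * (y 1 ^ 2) ^ p.2 := by
  simp [evenForm, pow_mul]

end MvPolynomial

section Calibration

noncomputable def calibrationCoeff : ℕ → ℝ
  | 0 => 1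
  | k + 1 => (4 * k + 1) / ((2 * k + 2) * (2 * k + 1)) * calibrationCoeff k

local notation "g" => calibrationCoeff

theorem calibrationCoeff_succ (k : ℕ) :
    g (k + 1) = (4 * k + 1) / ((2 * k + 2) * (2 * k + 1)) * g k :=
  rfl

theorem calibrationCoeff_pos (k : ℕ) : 0 < g k := by
  induction k with
  | zero => exact one_pos
  | succ k ih => rw [calibrationCoeff_succ]; positivity

theorem calibrationCoeff_mul_le_choose (i j : ℕ) :
    (4 * j + 1) * g i * g j ≤ (4 * (i + j : ℕ) + 1) * g (i + j) * (i + j).choose i := by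
  induction i with
  | zero => simp [calibrationCoeff]
  | succ i ih =>
    set n := i + j
    have hchoose : ((n + 1).choose (i + 1) : ℝ) = (n + 1) / (i + 1) * n.choose i := by
      rw [div_mul_eq_mul_div, eq_div_iff (by positivity)]
      exact_mod_cast (Nat.add_one_mul_choose_eq n i).symm
    have hR : (4 * (n + 1 : ℕ) + 1) * g (n + 1) * (n + 1).choose (i + 1) =
        (4 * n + 5) / ((2 * n + 1) * (2 * i + 2)) * ((4 * n + 1) * g n * n.choose i) := by
      rw [calibrationCoeff_succ, hchoose]
      push_cast
      field_simp
      ring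
    have hratio : (4 * i + 1 : ℝ) / ((2 * i + 2) * (2 * i + 1)) ≤
        (4 * n + 5) / ((2 * n + 1) * (2 * i + 2)) := by
      rw [div_le_div_iff₀ (by positivity) (by positivity)]
      nlinarith
    have := calibrationCoeff_pos i
    have := calibrationCoeff_pos j
    have := calibrationCoeff_pos n
    rw [show i + 1 + j = n + 1 by omega, hR, calibrationCoeff_succ]
    calc (4 * j + 1) * ((4 * i + 1) / ((2 * i + 2) * (2 * i + 1)) * g i) * g j
        = (4 * i + 1) / ((2 * i + 2) * (2 * i + 1)) * ((4 * j + 1) * g i * g j) := by ring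
      _ ≤ _ := by gcongr

/-- The coefficient of `X 0 ^ (2 * (n - k)) * X 1 ^ (2 * k)` is the `c_k` of the paper. -/
noncomputable def calibrationWeight (n : ℕ) : MvPolynomial (Fin 2) ℝ :=
  evenForm n fun i j => (4 * j + 1) * g i * g j / ((4 * n + 1) * g n)

noncomputable def calibrationPoly (n : ℕ) : MvPolynomial (Fin 2) ℝ :=
  evenForm (n + 1) (fun i j => g i * g j / ((4 * n + 1) * g n)) -
    evenForm (n + 2) fun i j =>
      (2 * n + 1) * g i * g j * (1 + 3 / ((4 * i - 3) * (4 * j - 3))) / (2 * ((4 * n + 1) * g n))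

theorem X_zero_sq_add_X_one_sq_mul_calibrationWeight (n : ℕ) :
    (X 0 ^ 2 + X 1 ^ 2) * calibrationWeight n = evenForm (n + 1) fun i j =>
      (2 * i * (2 * i - 1) / (4 * i - 3) * (4 * j + 1) + 2 * j * (2 * j - 1)) * g i * g j /
        ((4 * n + 1) * g n) := by
  rw [add_mul, calibrationWeight,
    X_zero_sq_mul_evenForm (v := fun i j =>
      2 * i * (2 * i - 1) / (4 * i - 3) * (4 * j + 1) * g i * g j / ((4 * n + 1) * g n)),
    X_one_sq_mul_evenForm (v := fun i j => 2 * j * (2 * j - 1) * g i * g j / ((4 * n + 1) * g n)),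
    ← evenForm_add]
  · exact evenForm_congr fun i j _ => by ring
  · simp
  · intro i j _
    rw [calibrationCoeff_succ]
    push_cast
    field_simp
    ring
  · simp
  · intro i j _
    rw [calibrationCoeff_succ]
    push_cast
    rw [show 4 * ((i : ℝ) + 1) - 3 = 4 * i + 1 by ring]
    field_simp
    ring

theorem pderiv_one_pderiv_one_calibrationPoly (n : ℕ) :
    pderiv 1 (pderiv 1 (calibrationPoly n)) = calibrationWeight n * (1 - (X 0 ^ 2 + X 1 ^ 2)) := by
  have := calibrationCoeff_pos n
  have hlow : pderiv 1 (pderiv 1 (evenForm (n + 1) fun i j => g i * g j / ((4 * n + 1) * g n))) =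
      calibrationWeight n := by
    rw [pderiv_one_pderiv_one_evenForm, calibrationWeight]
    refine evenForm_congr fun i j _ => ?_
    rw [calibrationCoeff_succ]
    push_cast
    field_simp
  have hhigh : pderiv 1 (pderiv 1 (evenForm (n + 2) fun i j =>
      (2 * n + 1) * g i * g j * (1 + 3 / ((4 * i - 3) * (4 * j - 3))) / (2 * ((4 * n + 1) * g n)))) =
      (X 0 ^ 2 + X 1 ^ 2) * calibrationWeight n := by
    rw [pderiv_one_pderiv_one_evenForm, X_zero_sq_add_X_one_sq_mul_calibrationWeight]
    refine evenForm_congr fun i j hij => ?_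
    have hi : (4 * i - 3 : ℝ) ≠ 0 := by
      intro h
      have : 4 * i = 3 := by exact_mod_cast (sub_eq_zero.mp h)
      omega
    have hn : (n : ℝ) = i + j - 1 := by
      rw [eq_sub_iff_add_eq]; exact_mod_cast hij.symm
    rw [calibrationCoeff_succ]
    push_cast
    rw [show 4 * ((j : ℝ) + 1) - 3 = 4 * j + 1 by ring]
    field_simp
    rw [hn]
    ring
  rw [calibrationPoly, map_sub, map_sub, hlow, hhigh]
  ring

theorem rename_swap_calibrationPoly (n : ℕ) :
    rename (Equiv.swap 0 1) (calibrationPoly n) = calibrationPoly n := by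
  simp only [calibrationPoly, map_sub, rename_swap_evenForm]
  congr 1 <;> congr 1 <;> ext i j <;> ring

theorem eval_calibrationWeight_nonneg (n : ℕ) (y : Fin 2 → ℝ) :
    0 ≤ eval y (calibrationWeight n) := by
  rw [calibrationWeight, eval_evenForm]
  refine sum_nonneg fun p _ => ?_
  have := calibrationCoeff_pos p.1
  have := calibrationCoeff_pos p.2
  have := calibrationCoeff_pos n
  positivity

theorem eval_calibrationWeight_le (n : ℕ) (y : Fin 2 → ℝ) :
    eval y (calibrationWeight n) ≤ (y 0 ^ 2 + y 1 ^ 2) ^ n := by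
  rw [calibrationWeight, eval_evenForm, (Commute.all _ _).add_pow']
  refine sum_le_sum fun p hp => ?_
  have hcoeff : (4 * p.2 + 1) * g p.1 * g p.2 / ((4 * n + 1) * g n) ≤ n.choose p.1 := by
    have := calibrationCoeff_pos n
    rw [div_le_iff₀ (by positivity), ← mem_antidiagonal.mp hp]
    simpa [mul_comm, mul_left_comm, mul_assoc] using calibrationCoeff_mul_le_choose p.1 p.2
  rw [nsmul_eq_mul, ← mul_assoc]
  gcongr

theorem eval_calibrationWeight_of_eq_zero (n : ℕ) {y : Fin 2 → ℝ} (hy : y 0 = 0) :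
    eval y (calibrationWeight n) = y 1 ^ (2 * n) := by
  rw [calibrationWeight, eval_evenForm, sum_eq_single (0, n)]
  · have := calibrationCoeff_pos n
    simp [calibrationCoeff, pow_mul]
    field_simp
  · rintro ⟨i, j⟩ hp hij
    have hi : i ≠ 0 := by
      rintro rfl
      exact hij (by simpa using mem_antidiagonal.mp hp)
    simp [hy, hi]
  · simp

theorem abs_eval_calibrationWeight_mul_le (n : ℕ) (y : Fin 2 → ℝ) :
    |eval y (calibrationWeight n * (1 - (X 0 ^ 2 + X 1 ^ 2)))| ≤
      (y 0 ^ 2 + y 1 ^ 2) ^ n * |1 - (y 0 ^ 2 + y 1 ^ 2)| := by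
  simp only [eval_mul, eval_sub, eval_add, eval_pow, eval_X, map_one, abs_mul,
    abs_of_nonneg (eval_calibrationWeight_nonneg n y)]
  gcongr
  exact eval_calibrationWeight_le n y

end Calibration

theorem exists_polynomial_calibration (n : ℕ) :
    ∃ P : MvPolynomial (Fin 2) ℝ,
      (∀ y : Fin 2 → ℝ,
        |eval y (pderiv 0 (pderiv 0 P))| ≤ (y 0^2 + y 1^2)^n * |1 - (y 0^2 + y 1^2)|) ∧
      (∀ y : Fin 2 → ℝ,
        |eval y (pderiv 1 (pderiv 1 P))| ≤ (y 0^2 + y 1^2)^n * |1 - (y 0^2 + y 1^2)|) ∧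
      (∀ t : ℝ, eval (fun i => if i = 0 then (0 : ℝ) else t) (pderiv 1 (pderiv 1 P)) =
        t^(2*n) * (1 - t^2)) := by
  refine ⟨calibrationPoly n, fun y => ?_, fun y => ?_, fun t => ?_⟩
  · rw [pderiv_zero_pderiv_zero_eq_rename_swap (rename_swap_calibrationPoly n),
      pderiv_one_pderiv_one_calibrationPoly, eval_rename]
    simpa [add_comm] using abs_eval_calibrationWeight_mul_le n (y ∘ Equiv.swap 0 1)
  · rw [pderiv_one_pderiv_one_calibrationPoly]
    exact abs_eval_calibrationWeight_mul_le n y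
  · rw [pderiv_one_pderiv_one_calibrationPoly, eval_mul,
      eval_calibrationWeight_of_eq_zero n (by simp)]
    simp
end
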